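/- arXiv:1305.6843 — 2 statements merged into one kernel-verified Lean document; each statement's English description precedes it below -/
import Mathlib

section
/- (Main theorem) A finite simple semigroup S = M(G; I, Λ; P) with normalized matrix P is an equational domain in the semigroup language with constants if and only if (1) P is nonsingular (no two equal rows, no two equal columns) and (2) G is an equational domain in the group language with constants (equivalently, G has no zero-divisors). -/
/-!
In `S = M(G; I, Λ; P)` the maximal subgroup `H = {l₀} × G × {i₀}` is a copy of `G`, and equations
pass through it in both directions: as `G` is finite, inverses are positive powers, so group terms
become semigroup terms on `H`; and a semigroup term evaluated on `H` has fixed outer coordinates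
and a group term in the middle. Since `x ↦ (l₀,1,i₀) x (l₀,1,i₀)` retracts `S` onto `H`, a finite
union of algebraic sets of `G` is the trace on `H` of the union of their pullbacks to `S`.
Conversely it suffices that `{x = y ∨ z = w}` be algebraic in `S`. For nonsingular `P` an element
`(λ, g, j)` is determined by the products `p_{iλ} g` and `g p_{jμ}`, which terms compute in `H`,
so this set is cut out by the corresponding set of `G`. If two columns `λ ≠ μ` of `P` coincide, a
term tells `a = (λ,1,i₀)` from `u = (μ,1,i₀)` only through its first letter, which forces `(u, u)`
into the closure of `{x = a} ∪ {y = a}`; dually for rows.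
-/

namespace Stmt

/-- Evaluation of a single letter (variable or constant). -/
def evalL {S : Type*} {n : ℕ} (p : Fin n → S) : Fin n ⊕ S → S
  | Sum.inl i => p i
  | Sum.inr s => s

/-- A semigroup term with constants: a nonempty word in variables `x₁,…,xₙ`
and constants from `S` (head letter together with the remaining letters). -/
abbrev SgTerm (S : Type*) (n : ℕ) : Type _ := (Fin n ⊕ S) × List (Fin n ⊕ S)

/-- Value of a term at a point, w.r.t. an explicit binary operation `mul`. -/
def SgTerm.eval {S : Type*} {n : ℕ} (mul : S → S → S) (t : SgTerm S n)
    (p : Fin n → S) : S :=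
  t.2.foldl (fun a l => mul a (evalL p l)) (evalL p t.1)

/-- `Y ⊆ Sⁿ` is algebraic: it is the solution set of a system of equations
`t(X) = s(X)` between semigroup terms with constants. -/
def IsAlgebraic {S : Type*} {n : ℕ} (mul : S → S → S) (Y : Set (Fin n → S)) : Prop :=
  ∃ Sys : Set (SgTerm S n × SgTerm S n),
    Y = {p | ∀ e ∈ Sys, SgTerm.eval mul e.1 p = SgTerm.eval mul e.2 p}

/-- `S` is an equational domain: every finite union of algebraic sets is algebraic. -/
def IsEqDomain (S : Type*) (mul : S → S → S) : Prop :=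
  ∀ (n m : ℕ) (Y : Fin m → Set (Fin n → S)),
    (∀ i, IsAlgebraic mul (Y i)) → IsAlgebraic mul (⋃ i, Y i)

/-- A group term with constants: a word in integer powers of variables and
constants from `G`, i.e. an element of `F(X) ∗ G`. -/
abbrev GTerm (G : Type*) (n : ℕ) : Type _ := List ((Fin n × ℤ) ⊕ G)

/-- Value of a group term at a point. -/
def GTerm.eval {G : Type*} [Group G] {n : ℕ} (t : GTerm G n) (p : Fin n → G) : G :=
  (t.map (fun l => match l with
    | Sum.inl (i, k) => p i ^ k
    | Sum.inr g => g)).prod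

/-- `Y ⊆ Gⁿ` is algebraic over the group `G` (group equations with constants). -/
def IsGAlgebraic {G : Type*} [Group G] {n : ℕ} (Y : Set (Fin n → G)) : Prop :=
  ∃ Sys : Set (GTerm G n × GTerm G n),
    Y = {p | ∀ e ∈ Sys, GTerm.eval e.1 p = GTerm.eval e.2 p}

/-- `G` is an equational domain as a group. -/
def IsGEqDomain (G : Type*) [Group G] : Prop :=
  ∀ (n m : ℕ) (Y : Fin m → Set (Fin n → G)),
    (∀ i, IsGAlgebraic (Y i)) → IsGAlgebraic (⋃ i, Y i)

/-- Multiplication of the Rees matrix semigroup `M(G; I, Λ; P)` on `Λ × G × I`: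
`(λ,g,i)(μ,h,j) = (λ, g · p_{iμ} · h, j)`. -/
def reesMul {G I Λ : Type*} [Group G] (P : I → Λ → G) (a b : Λ × G × I) : Λ × G × I :=
  (a.1, a.2.1 * P a.2.2 b.1 * b.2.1, b.2.2)

/-- `P` is normalized w.r.t. the distinguished indices `i0 ∈ I`, `l0 ∈ Λ`:
its first row and first column consist of identity elements. -/
def Normalized {G I Λ : Type*} [Group G] (P : I → Λ → G) (i0 : I) (l0 : Λ) : Prop :=
  (∀ i, P i l0 = 1) ∧ (∀ l, P i0 l = 1)

/-- `P` is nonsingular: no two equal rows and no two equal columns. -/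
def Nonsingular {G I Λ : Type*} [Group G] (P : I → Λ → G) : Prop :=
  (∀ i j : I, (∀ l, P i l = P j l) → i = j) ∧
  (∀ l m : Λ, (∀ i, P i l = P i m) → l = m)


section TermFun

variable {S : Type*} (mul : S → S → S) {n : ℕ}

inductive IsTermFun : ((Fin n → S) → S) → Prop
  | var (j : Fin n) : IsTermFun fun p => p j
  | const (c : S) : IsTermFun fun _ => c
  | mul {f g : (Fin n → S) → S} :
      IsTermFun f → IsTermFun g → IsTermFun fun p => mul (f p) (g p)

variable {mul}

lemma isTermFun_evalL (ℓ : Fin n ⊕ S) : IsTermFun mul fun p => evalL p ℓ := by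
  rcases ℓ with j | c
  exacts [.var j, .const c]

lemma isTermFun_eval (t : SgTerm S n) : IsTermFun mul (SgTerm.eval mul t) := by
  suffices h : ∀ (L : List (Fin n ⊕ S)) (f : (Fin n → S) → S), IsTermFun mul f →
      IsTermFun mul fun p => L.foldl (fun a ℓ => mul a (evalL p ℓ)) (f p) from
    h t.2 _ (isTermFun_evalL t.1)
  intro L
  induction L with
  | nil => exact fun _ hf => hf
  | cons ℓ L ih => exact fun f hf => ih _ (hf.mul (isTermFun_evalL ℓ))

lemma IsTermFun.exists_eval_eq [Std.Associative mul]
    {f : (Fin n → S) → S} (hf : IsTermFun mul f) : ∃ t : SgTerm S n, SgTerm.eval mul t = f := by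
  have foldl_mul : ∀ (p : Fin n → S) (L : List (Fin n ⊕ S)) (a b : S),
      L.foldl (fun x ℓ => mul x (evalL p ℓ)) (mul a b)
        = mul a (L.foldl (fun x ℓ => mul x (evalL p ℓ)) b) := by
    intro p L
    induction L with
    | nil => exact fun _ _ => rfl
    | cons ℓ L ih => intro a b; simp only [List.foldl_cons, Std.Associative.assoc, ih]
  induction hf with
  | var j => exact ⟨(.inl j, []), rfl⟩
  | const c => exact ⟨(.inr c, []), rfl⟩
  | mul _ _ ihf ihg =>
    obtain ⟨t, rfl⟩ := ihf
    obtain ⟨u, rfl⟩ := ihg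
    refine ⟨(t.1, t.2 ++ u.1 :: u.2), funext fun p => ?_⟩
    simp only [SgTerm.eval, List.foldl_append, List.foldl_cons, foldl_mul]

lemma IsTermFun.comp {k : ℕ} {F : (Fin k → S) → S} (hF : IsTermFun mul F)
    {σ : Fin k → (Fin n → S) → S} (hσ : ∀ j, IsTermFun mul (σ j)) :
    IsTermFun mul fun p => F fun j => σ j p := by
  induction hF with
  | var j => exact hσ j
  | const c => exact .const c
  | mul _ _ ihf ihg => exact ihf.mul ihg

end TermFun

section Algebraic

variable {S : Type*} {mul : S → S → S} {n : ℕ}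

lemma IsAlgebraic.iInter {ι : Type*} {Y : ι → Set (Fin n → S)}
    (hY : ∀ i, IsAlgebraic mul (Y i)) : IsAlgebraic mul (⋂ i, Y i) := by
  choose Sys hSys using hY
  refine ⟨⋃ i, Sys i, ?_⟩
  ext p
  simp only [Set.mem_iInter, hSys, Set.mem_ofPred_eq, Set.mem_iUnion]
  exact ⟨fun h e ⟨i, he⟩ => h i e he, fun h i e he => h e ⟨i, he⟩⟩

lemma isAlgebraic_setOf_eval_eq (t s : SgTerm S n) :
    IsAlgebraic mul {p | SgTerm.eval mul t p = SgTerm.eval mul s p} :=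
  ⟨{(t, s)}, by simp⟩

lemma isAlgebraic_setOf_eq [Std.Associative mul]
    {f g : (Fin n → S) → S} (hf : IsTermFun mul f) (hg : IsTermFun mul g) :
    IsAlgebraic mul {p | f p = g p} := by
  obtain ⟨t, rfl⟩ := hf.exists_eval_eq
  obtain ⟨s, rfl⟩ := hg.exists_eval_eq
  exact isAlgebraic_setOf_eval_eq t s

lemma IsAlgebraic.eq_iInter {Y : Set (Fin n → S)} (hY : IsAlgebraic mul Y) :
    ∃ Sys : Set (SgTerm S n × SgTerm S n),
      Y = ⋂ e : Sys, {p | SgTerm.eval mul e.1.1 p = SgTerm.eval mul e.1.2 p} := by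
  obtain ⟨Sys, rfl⟩ := hY
  exact ⟨Sys, by ext; simp⟩

lemma IsAlgebraic.preimage [Std.Associative mul] {k : ℕ}
    {Y : Set (Fin k → S)} (hY : IsAlgebraic mul Y) {σ : Fin k → (Fin n → S) → S}
    (hσ : ∀ j, IsTermFun mul (σ j)) : IsAlgebraic mul {p | (fun j => σ j p) ∈ Y} := by
  obtain ⟨Sys, rfl⟩ := hY.eq_iInter
  simp only [Set.mem_iInter, Set.ofPred_forall]
  exact .iInter fun e => isAlgebraic_setOf_eq
    ((isTermFun_eval _).comp hσ) ((isTermFun_eval _).comp hσ)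

end Algebraic

section EqDomain

variable {S : Type*} {mul : S → S → S} {n : ℕ}

lemma IsAlgebraic.union [Std.Associative mul]
    (hD : IsAlgebraic mul {p : Fin 4 → S | p 0 = p 1 ∨ p 2 = p 3})
    {Y₁ Y₂ : Set (Fin n → S)} (h₁ : IsAlgebraic mul Y₁) (h₂ : IsAlgebraic mul Y₂) :
    IsAlgebraic mul (Y₁ ∪ Y₂) := by
  obtain ⟨S₁, rfl⟩ := h₁.eq_iInter
  obtain ⟨S₂, rfl⟩ := h₂.eq_iInter
  have hunion : (⋂ e₁ : S₁, {p | SgTerm.eval mul e₁.1.1 p = SgTerm.eval mul e₁.1.2 p}) ∪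
      ⋂ e₂ : S₂, {p | SgTerm.eval mul e₂.1.1 p = SgTerm.eval mul e₂.1.2 p} =
      ⋂ (e₁ : S₁) (e₂ : S₂), {p | (fun j => ![SgTerm.eval mul e₁.1.1, SgTerm.eval mul e₁.1.2,
        SgTerm.eval mul e₂.1.1, SgTerm.eval mul e₂.1.2] j p) ∈
          {q : Fin 4 → S | q 0 = q 1 ∨ q 2 = q 3}} := by
    ext p
    simp only [Set.mem_union, Set.mem_iInter, Set.mem_ofPred_eq, Matrix.cons_val]
    rw [← forall_or_right]
    exact forall_congr' fun _ => forall_or_left.symm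
  rw [hunion]
  exact .iInter fun e₁ => .iInter fun e₂ => hD.preimage fun j => by
    fin_cases j <;> exact isTermFun_eval _

lemma isEqDomain_of_isAlgebraic_eq_or_eq [Nontrivial S] [Std.Associative mul]
    (hD : IsAlgebraic mul {p : Fin 4 → S | p 0 = p 1 ∨ p 2 = p 3}) : IsEqDomain S mul := by
  intro n m Y hY
  induction m with
  | zero =>
    obtain ⟨c, d, hcd⟩ := exists_pair_ne S
    simpa [hcd] using isAlgebraic_setOf_eq (n := n) (.const c) (.const d)
  | succ m ih =>
    rw [Set.iUnion_fin_add_one_eq_iUnion_succ]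
    exact hD.union (hY 0) (ih _ fun i => hY i.succ)

lemma IsEqDomain.isAlgebraic_union (h : IsEqDomain S mul) {Y₁ Y₂ : Set (Fin n → S)}
    (h₁ : IsAlgebraic mul Y₁) (h₂ : IsAlgebraic mul Y₂) : IsAlgebraic mul (Y₁ ∪ Y₂) := by
  have hY : ⋃ i, ![Y₁, Y₂] i = Y₁ ∪ Y₂ := by ext; simp [Fin.exists_fin_two]
  exact hY ▸ h n 2 ![Y₁, Y₂] (Fin.forall_fin_two.2 ⟨h₁, h₂⟩)

lemma IsEqDomain.nontrivial (h : IsEqDomain S mul) : Nontrivial S := by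
  obtain ⟨Sys, hSys⟩ := h 0 0 (fun i => i.elim0) fun i => i.elim0
  by_contra hS
  rw [not_nontrivial_iff_subsingleton] at hS
  have hmem : (Fin.elim0 : Fin 0 → S) ∈ ⋃ i : Fin 0, (i.elim0 : Set (Fin 0 → S)) := by
    rw [hSys]
    exact fun _ _ => Subsingleton.elim _ _
  simp at hmem

end EqDomain

section Kernel

variable {S X K : Type*} {mul : S → S → S} {n : ℕ}

lemma IsTermFun.kernel_eq {κ : S → K}
    (hκ : ∀ s s' t t', κ s = κ s' → κ t = κ t' → κ (mul s t) = κ (mul s' t'))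
    {f : (Fin n → S) → S} (hf : IsTermFun mul f) {p p' : Fin n → S}
    (hp : ∀ j, κ (p j) = κ (p' j)) : κ (f p) = κ (f p') := by
  induction hf with
  | var j => exact hp j
  | const c => rfl
  | mul _ _ ihf ihg => exact hκ _ _ _ _ ihf ihg

lemma IsTermFun.proj_eq_const_or_coord {π : S → X}
    (hπ : (∀ s t, π (mul s t) = π s) ∨ ∀ s t, π (mul s t) = π t)
    {f : (Fin n → S) → S} (hf : IsTermFun mul f) :
    (∃ c, ∀ p, π (f p) = c) ∨ ∃ j, ∀ p, π (f p) = π (p j) := by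
  induction hf with
  | var j => exact .inr ⟨j, fun _ => rfl⟩
  | const c => exact .inl ⟨π c, fun _ => rfl⟩
  | mul _ _ ihf ihg => rcases hπ with h | h <;> simp only [h] <;> assumption

/-- `(u, u)` satisfies every equation that holds on `{p | p 0 = a} ∪ {p | p 1 = a}`. -/
theorem not_isEqDomain_of_kernel (π : S → X) (κ : S → K)
    (hπ : (∀ s t, π (mul s t) = π s) ∨ ∀ s t, π (mul s t) = π t)
    (hκ : ∀ s s' t t', κ s = κ s' → κ t = κ t' → κ (mul s t) = κ (mul s' t'))
    (hinj : ∀ s s', π s = π s' → κ s = κ s' → s = s') {a u : S} (hπau : π a ≠ π u)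
    (hκau : κ a = κ u) : ¬ IsEqDomain S mul := by
  intro h
  classical
  -- `π ∘ f` is constant or a coordinate, and the values at `(a, u)` and `(u, a)` tell which.
  have hdiag : ∀ f : (Fin 2 → S) → S, IsTermFun mul f → π (f ![u, u]) =
      if π (f ![a, u]) = π (f ![u, a]) then π (f ![a, u]) else π u := by
    intro f hf
    rcases hf.proj_eq_const_or_coord hπ with ⟨c, hc⟩ | ⟨j, hj⟩
    · simp [hc]
    · fin_cases j <;> simp [hj, hπau, Ne.symm hπau]
  have hκ_eq : ∀ f : (Fin 2 → S) → S, IsTermFun mul f → κ (f ![u, u]) = κ (f ![a, u]) :=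
    fun f hf => hf.kernel_eq hκ fun j => by fin_cases j <;> simp [hκau]
  obtain ⟨Sys, hSys⟩ : IsAlgebraic mul ({p : Fin 2 → S | p 0 = a} ∪ {p | p 1 = a}) :=
    h.isAlgebraic_union
    (isAlgebraic_setOf_eval_eq (n := 2) (.inl 0, []) (.inr a, []))
    (isAlgebraic_setOf_eval_eq (.inl 1, []) (.inr a, []))
  have hsol : ∀ q ∈ {p : Fin 2 → S | p 0 = a} ∪ {p | p 1 = a},
      ∀ e ∈ Sys, SgTerm.eval mul e.1 q = SgTerm.eval mul e.2 q := by
    rw [hSys]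
    exact fun _ => id
  have huu : ![u, u] ∈ {p : Fin 2 → S | p 0 = a} ∪ {p | p 1 = a} := by
    rw [hSys]
    intro e he
    have h₁ := hsol ![a, u] (.inl rfl) e he
    have h₂ := hsol ![u, a] (.inr rfl) e he
    have hf := isTermFun_eval (mul := mul) e.1
    have hg := isTermFun_eval (mul := mul) e.2
    refine hinj _ _ ?_ ?_
    · rw [hdiag _ hf, hdiag _ hg, h₁, h₂]
    · rw [hκ_eq _ hf, hκ_eq _ hg, h₁]
  rcases huu with h' | h' <;> exact hπau (congrArg π h').symm

end Kernel

section GroupTermFun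

variable {G : Type*} [Group G] {n : ℕ}

inductive IsGTermFun : ((Fin n → G) → G) → Prop
  | zpow_var (j : Fin n) (k : ℤ) : IsGTermFun fun q => q j ^ k
  | const (c : G) : IsGTermFun fun _ => c
  | mul {F F' : (Fin n → G) → G} :
      IsGTermFun F → IsGTermFun F' → IsGTermFun fun q => F q * F' q

lemma IsGTermFun.var (j : Fin n) : IsGTermFun fun q : Fin n → G => q j := by
  simpa using IsGTermFun.zpow_var (G := G) j 1

@[simp]
lemma GTerm.eval_nil : GTerm.eval ([] : GTerm G n) = fun _ => 1 := rfl

@[simp]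
lemma GTerm.eval_cons_inl (j : Fin n) (k : ℤ) (t : GTerm G n) :
    GTerm.eval (.inl (j, k) :: t) = fun q => q j ^ k * GTerm.eval t q := rfl

@[simp]
lemma GTerm.eval_cons_inr (c : G) (t : GTerm G n) :
    GTerm.eval (.inr c :: t) = fun q => c * GTerm.eval t q := rfl

@[simp]
lemma GTerm.eval_append (t t' : GTerm G n) :
    GTerm.eval (t ++ t') = fun q => GTerm.eval t q * GTerm.eval t' q :=
  funext fun _ => by simp [GTerm.eval]

lemma isGTermFun_eval (t : GTerm G n) : IsGTermFun (GTerm.eval t) := by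
  induction t with
  | nil => exact .const 1
  | cons ℓ t ih =>
    rcases ℓ with ⟨j, k⟩ | c
    exacts [(IsGTermFun.zpow_var j k).mul ih, (IsGTermFun.const c).mul ih]

lemma IsGTermFun.exists_eval_eq {F : (Fin n → G) → G} (hF : IsGTermFun F) :
    ∃ t : GTerm G n, GTerm.eval t = F := by
  induction hF with
  | zpow_var j k => exact ⟨[.inl (j, k)], by simp⟩
  | const c => exact ⟨[.inr c], by simp⟩
  | mul _ _ ihF ihF' =>
    obtain ⟨t, rfl⟩ := ihF
    obtain ⟨t', rfl⟩ := ihF'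
    exact ⟨t ++ t', GTerm.eval_append t t'⟩

lemma IsGAlgebraic.iInter {ι : Type*} {Y : ι → Set (Fin n → G)}
    (hY : ∀ i, IsGAlgebraic (Y i)) : IsGAlgebraic (⋂ i, Y i) := by
  choose Sys hSys using hY
  refine ⟨⋃ i, Sys i, ?_⟩
  ext q
  simp only [Set.mem_iInter, hSys, Set.mem_ofPred_eq, Set.mem_iUnion]
  exact ⟨fun h e ⟨i, he⟩ => h i e he, fun h i e he => h e ⟨i, he⟩⟩

lemma isGAlgebraic_setOf_eq {F F' : (Fin n → G) → G} (hF : IsGTermFun F)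
    (hF' : IsGTermFun F') : IsGAlgebraic {q | F q = F' q} := by
  obtain ⟨t, rfl⟩ := hF.exists_eval_eq
  obtain ⟨t', rfl⟩ := hF'.exists_eval_eq
  exact ⟨{(t, t')}, by simp⟩

lemma isGAlgebraic_empty [Nontrivial G] : IsGAlgebraic (∅ : Set (Fin n → G)) := by
  obtain ⟨c, hc⟩ := exists_ne (1 : G)
  simpa [hc] using isGAlgebraic_setOf_eq (n := n) (.const c) (.const 1)

lemma IsGAlgebraic.eq_iInter {Y : Set (Fin n → G)} (hY : IsGAlgebraic Y) :
    ∃ Sys : Set (GTerm G n × GTerm G n),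
      Y = ⋂ e : Sys, {q | GTerm.eval e.1.1 q = GTerm.eval e.1.2 q} := by
  obtain ⟨Sys, rfl⟩ := hY
  exact ⟨Sys, by ext; simp⟩

lemma IsGEqDomain.isGAlgebraic_union (h : IsGEqDomain G) {Y₁ Y₂ : Set (Fin n → G)}
    (h₁ : IsGAlgebraic Y₁) (h₂ : IsGAlgebraic Y₂) : IsGAlgebraic (Y₁ ∪ Y₂) := by
  have hY : ⋃ i, ![Y₁, Y₂] i = Y₁ ∪ Y₂ := by ext; simp [Fin.exists_fin_two]
  exact hY ▸ h n 2 ![Y₁, Y₂] (Fin.forall_fin_two.2 ⟨h₁, h₂⟩)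

lemma IsGEqDomain.nontrivial (h : IsGEqDomain G) : Nontrivial G := by
  obtain ⟨Sys, hSys⟩ := h 0 0 (fun i => i.elim0) fun i => i.elim0
  by_contra hG
  rw [not_nontrivial_iff_subsingleton] at hG
  have hmem : (1 : Fin 0 → G) ∈ ⋃ i : Fin 0, (i.elim0 : Set (Fin 0 → G)) := by
    rw [hSys]
    exact fun _ _ => Subsingleton.elim _ _
  simp at hmem

end GroupTermFun

lemma exists_pow_succ_eq_zpow (G : Type*) [Group G] [Finite G] (k : ℤ) :
    ∃ m : ℕ, ∀ g : G, g ^ (m + 1) = g ^ k := by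
  have hN := Nat.card_pos (α := G)
  refine ⟨(k % Nat.card G).toNat + Nat.card G - 1, fun g => ?_⟩
  have hmod : 0 ≤ k % Nat.card G := Int.emod_nonneg _ (by omega)
  rw [← zpow_natCast, zpow_eq_zpow_emod' k (pow_card_eq_one' (x := g))]
  rw [show (((k % Nat.card G).toNat + Nat.card G - 1 + 1 : ℕ) : ℤ)
      = k % Nat.card G + Nat.card G by omega]
  rw [zpow_add, zpow_natCast, pow_card_eq_one', mul_one]

section Rees

variable {G I Λ : Type*} [Group G] (P : I → Λ → G)

instance : Std.Associative (reesMul P) :=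
  ⟨fun _ _ _ => by simp [reesMul, mul_assoc]⟩

variable {n : ℕ}

lemma IsTermFun.exists_comp_mk {E : (Fin n → Λ × G × I) → Λ × G × I}
    (hE : IsTermFun (reesMul P) E) (l₀ : Λ) (i₀ : I) :
    ∃ l F i, IsGTermFun F ∧ ∀ q : Fin n → G, E (fun j => (l₀, q j, i₀)) = (l, F q, i) := by
  induction hE with
  | var j => exact ⟨l₀, _, i₀, .var j, fun _ => rfl⟩
  | const c => exact ⟨c.1, _, c.2.2, .const c.2.1, fun _ => rfl⟩
  | mul _ _ ihf ihg =>
    obtain ⟨l, F, i, hF, hf⟩ := ihf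
    obtain ⟨l', F', i', hF', hg⟩ := ihg
    exact ⟨l, _, i', (hF.mul (.const (P i l'))).mul hF', fun q => by simp [reesMul, hf, hg]⟩

lemma IsAlgebraic.isGAlgebraic_preimage_mk [Nontrivial G] {Z : Set (Fin n → Λ × G × I)}
    (hZ : IsAlgebraic (reesMul P) Z) (l₀ : Λ) (i₀ : I) :
    IsGAlgebraic {q : Fin n → G | (fun j => (l₀, q j, i₀)) ∈ Z} := by
  obtain ⟨Sys, rfl⟩ := hZ.eq_iInter
  simp only [Set.mem_iInter, Set.ofPred_forall]
  refine .iInter fun e => ?_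
  obtain ⟨l, F, i, hF, hE⟩ := (isTermFun_eval e.1.1).exists_comp_mk P l₀ i₀
  obtain ⟨l', F', i', hF', hE'⟩ := (isTermFun_eval e.1.2).exists_comp_mk P l₀ i₀
  simp only [Set.mem_ofPred_eq, hE, hE', Prod.mk.injEq]
  by_cases hl : l = l' <;> by_cases hi : i = i' <;>
    simp [hl, hi, isGAlgebraic_setOf_eq hF hF', isGAlgebraic_empty]

variable (i₀ : I) (l₀ : Λ)

/-- `H = {l₀} × G × {i₀}` is a maximal subgroup of `S`, isomorphic to `G` when `P i₀ l₀ = 1`. -/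
def IsHTermFun (f : (Fin n → Λ × G × I) → G) : Prop :=
  IsTermFun (reesMul P) fun p => (l₀, f p, i₀)

variable {P i₀ l₀}

lemma IsHTermFun.const (g : G) : IsHTermFun P i₀ l₀ (n := n) fun _ => g := IsTermFun.const _

lemma IsHTermFun.mul (h₀₀ : P i₀ l₀ = 1) {f g : (Fin n → Λ × G × I) → G}
    (hf : IsHTermFun P i₀ l₀ f) (hg : IsHTermFun P i₀ l₀ g) :
    IsHTermFun P i₀ l₀ fun p => f p * g p := by
  simpa [IsHTermFun, reesMul, h₀₀] using IsTermFun.mul hf hg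

lemma IsHTermFun.pow_succ (h₀₀ : P i₀ l₀ = 1) {f : (Fin n → Λ × G × I) → G}
    (hf : IsHTermFun P i₀ l₀ f) (m : ℕ) : IsHTermFun P i₀ l₀ fun p => f p ^ (m + 1) := by
  induction m with
  | zero => simpa using hf
  | succ m ih => simpa [_root_.pow_succ] using ih.mul h₀₀ hf

lemma IsHTermFun.zpow [Finite G] (h₀₀ : P i₀ l₀ = 1) {f : (Fin n → Λ × G × I) → G}
    (hf : IsHTermFun P i₀ l₀ f) (k : ℤ) : IsHTermFun P i₀ l₀ fun p => f p ^ k := by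
  obtain ⟨m, hm⟩ := exists_pow_succ_eq_zpow G k
  simpa [hm] using hf.pow_succ h₀₀ m

lemma IsGTermFun.isHTermFun_comp [Finite G] (h₀₀ : P i₀ l₀ = 1) {k : ℕ}
    {F : (Fin k → G) → G} (hF : IsGTermFun F) {f : Fin k → (Fin n → Λ × G × I) → G}
    (hf : ∀ j, IsHTermFun P i₀ l₀ (f j)) : IsHTermFun P i₀ l₀ fun p => F fun j => f j p := by
  induction hF with
  | zpow_var j k => exact (hf j).zpow h₀₀ k
  | const c => exact .const c
  | mul _ _ ihF ihF' => exact ihF.mul h₀₀ ihF'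

lemma IsGAlgebraic.isAlgebraic_preimage [Finite G] (h₀₀ : P i₀ l₀ = 1) {k : ℕ}
    {Y : Set (Fin k → G)} (hY : IsGAlgebraic Y) {f : Fin k → (Fin n → Λ × G × I) → G}
    (hf : ∀ j, IsHTermFun P i₀ l₀ (f j)) :
    IsAlgebraic (reesMul P) {p | (fun j => f j p) ∈ Y} := by
  obtain ⟨Sys, rfl⟩ := hY.eq_iInter
  simp only [Set.mem_iInter, Set.ofPred_forall, Set.mem_ofPred_eq]
  refine .iInter fun e => ?_
  simpa using isAlgebraic_setOf_eq
    ((isGTermFun_eval e.1.1).isHTermFun_comp h₀₀ hf)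
    ((isGTermFun_eval e.1.2).isHTermFun_comp h₀₀ hf)

end Rees

section ReesEqDomain

variable {G I Λ : Type*} [Group G] {P : I → Λ → G} {i₀ : I} {l₀ : Λ}

variable (P) in
def reesObs : I ⊕ Λ → Λ × G × I → G
  | .inl i, s => P i s.1 * s.2.1
  | .inr μ, s => s.2.1 * P s.2.2 μ

lemma isHTermFun_reesObs {n : ℕ} (hP : Normalized P i₀ l₀) (O : I ⊕ Λ) (j : Fin n) :
    IsHTermFun P i₀ l₀ fun p => reesObs P O (p j) := by
  rcases O with i | μ
  · simpa [IsHTermFun, reesMul, reesObs, hP.1] using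
      ((IsTermFun.const (mul := reesMul P) (l₀, 1, i)).mul (.var j)).mul
        (.const (l₀, (1 : G), i₀))
  · simpa [IsHTermFun, reesMul, reesObs, hP.2] using
      ((IsTermFun.const (mul := reesMul P) (l₀, 1, i₀)).mul (.var j)).mul
        (.const (μ, (1 : G), i₀))

lemma eq_of_reesObs_eq (hP : Normalized P i₀ l₀) (hNS : Nonsingular P) {s s' : Λ × G × I}
    (h : ∀ O, reesObs P O s = reesObs P O s') : s = s' := by
  have hg : s.2.1 = s'.2.1 := by simpa [reesObs, hP.2] using h (.inl i₀)
  have hl : s.1 = s'.1 := hNS.2 _ _ fun i => by simpa [reesObs, hg] using h (.inl i)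
  have hi : s.2.2 = s'.2.2 := hNS.1 _ _ fun μ => by simpa [reesObs, hg] using h (.inr μ)
  exact Prod.ext hl (Prod.ext hg hi)

lemma isAlgebraic_eq_or_eq_rees [Finite G] (hP : Normalized P i₀ l₀) (hNS : Nonsingular P)
    (hD : IsGAlgebraic {q : Fin 4 → G | q 0 = q 1 ∨ q 2 = q 3}) :
    IsAlgebraic (reesMul P) {p : Fin 4 → Λ × G × I | p 0 = p 1 ∨ p 2 = p 3} := by
  have hDS : {p : Fin 4 → Λ × G × I | p 0 = p 1 ∨ p 2 = p 3} = ⋂ (O : I ⊕ Λ) (O' : I ⊕ Λ),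
      {p | (fun j => ![fun p => reesObs P O (p 0), fun p => reesObs P O (p 1),
        fun p => reesObs P O' (p 2), fun p => reesObs P O' (p 3)] j p) ∈
          {q : Fin 4 → G | q 0 = q 1 ∨ q 2 = q 3}} := by
    ext p
    simp only [Set.mem_iInter, Set.mem_ofPred_eq, Matrix.cons_val]
    have hobs (s s' : Λ × G × I) : s = s' ↔ ∀ O, reesObs P O s = reesObs P O s' :=
      ⟨by rintro rfl _; rfl, eq_of_reesObs_eq hP hNS⟩
    simp only [hobs (p 0), hobs (p 2), forall_or_left, forall_or_right]
  rw [hDS]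
  exact .iInter fun O => .iInter fun O' => hD.isAlgebraic_preimage (hP.1 i₀)
    fun j => by fin_cases j <;> exact isHTermFun_reesObs hP _ _

theorem isEqDomain_of_isGEqDomain [Finite G] (hP : Normalized P i₀ l₀) (hNS : Nonsingular P)
    (h : IsGEqDomain G) : IsEqDomain (Λ × G × I) (reesMul P) := by
  have := h.nontrivial
  have : Nonempty Λ := ⟨l₀⟩
  have : Nonempty I := ⟨i₀⟩
  refine isEqDomain_of_isAlgebraic_eq_or_eq (isAlgebraic_eq_or_eq_rees hP hNS ?_)
  exact h.isGAlgebraic_union (isGAlgebraic_setOf_eq (.var 0) (.var 1))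
    (isGAlgebraic_setOf_eq (.var 2) (.var 3))

theorem isGEqDomain_of_isEqDomain [Finite G] [Nontrivial G] (hP : Normalized P i₀ l₀)
    (h : IsEqDomain (Λ × G × I) (reesMul P)) : IsGEqDomain G := by
  intro n m Y hY
  have hsnd (j : Fin n) : IsHTermFun P i₀ l₀ fun p => (p j).2.1 := by
    simpa [reesObs, hP.2] using isHTermFun_reesObs hP (.inl i₀) j
  have hlift (i : Fin m) : IsAlgebraic (reesMul P) {p | (fun j => (p j).2.1) ∈ Y i} :=
    (hY i).isAlgebraic_preimage (hP.1 i₀) hsnd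
  convert (h n m _ hlift).isGAlgebraic_preimage_mk P l₀ i₀ using 1
  ext q
  simp only [Set.mem_iUnion, Set.mem_ofPred_eq]

end ReesEqDomain

section Nonsingular

variable {G I Λ : Type*} [Group G] (P : I → Λ → G)

lemma not_isEqDomain_of_row_eq (l₀ : Λ) {i j : I} (hne : i ≠ j) (hij : ∀ l, P i l = P j l) :
    ¬ IsEqDomain (Λ × G × I) (reesMul P) := by
  refine not_isEqDomain_of_kernel (fun s => s.2.2) (fun s => (s.1, s.2.1, P s.2.2))
    (.inr fun _ _ => rfl) ?_ ?_ (a := (l₀, (1 : G), i)) (u := (l₀, 1, j)) hne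
    (by simp [funext hij])
  · intro s s' t t' hs ht
    simp only [reesMul, Prod.mk.injEq] at hs ht ⊢
    obtain ⟨h₁, h₂, h₃⟩ := hs
    obtain ⟨h₁', h₂', h₃'⟩ := ht
    exact ⟨h₁, by rw [h₂, h₃, h₁', h₂'], h₃'⟩
  · intro s s' hπ hκ
    simp only [Prod.mk.injEq] at hκ
    exact Prod.ext hκ.1 (Prod.ext hκ.2.1 hπ)

lemma not_isEqDomain_of_col_eq (i₀ : I) {l m : Λ} (hne : l ≠ m) (hlm : ∀ i, P i l = P i m) :
    ¬ IsEqDomain (Λ × G × I) (reesMul P) := by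
  refine not_isEqDomain_of_kernel (fun s => s.1) (fun s => (s.2, fun i => P i s.1))
    (.inl fun _ _ => rfl) ?_ ?_ (a := (l, (1 : G), i₀)) (u := (m, 1, i₀)) hne
    (by simp [hlm])
  · intro s s' t t' hs ht
    simp only [reesMul, Prod.mk.injEq, funext_iff] at hs ht ⊢
    obtain ⟨hs₂, hs₁⟩ := hs
    obtain ⟨ht₂, ht₁⟩ := ht
    exact ⟨⟨by rw [hs₂, ht₂, ht₁], congrArg Prod.snd ht₂⟩, hs₁⟩
  · intro s s' hπ hκ
    simp only [Prod.mk.injEq] at hκ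
    exact Prod.ext hπ hκ.1

theorem nonsingular_of_isEqDomain (i₀ : I) (l₀ : Λ) (h : IsEqDomain (Λ × G × I) (reesMul P)) :
    Nonsingular P :=
  ⟨fun _ _ hij => by_contra fun hne => not_isEqDomain_of_row_eq P l₀ hne hij h,
    fun _ _ hlm => by_contra fun hne => not_isEqDomain_of_col_eq P i₀ hne hlm h⟩

lemma Nonsingular.nontrivial {P : I → Λ → G} (hNS : Nonsingular P)
    (hS : Nontrivial (Λ × G × I)) : Nontrivial G := by
  by_contra hG
  rw [not_nontrivial_iff_subsingleton] at hG
  have : Subsingleton I := ⟨fun i j => hNS.1 i j fun _ => Subsingleton.elim _ _⟩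
  have : Subsingleton Λ := ⟨fun l m => hNS.2 l m fun _ => Subsingleton.elim _ _⟩
  exact not_nontrivial _ hS

end Nonsingular

theorem rees_eqDomain_iff_general (G I Λ : Type*) [Group G] [Fintype G]
    (P : I → Λ → G) (i0 : I) (l0 : Λ) (hP : Normalized P i0 l0) :
    IsEqDomain (Λ × G × I) (reesMul P) ↔ Nonsingular P ∧ IsGEqDomain G := by
  refine ⟨fun h => ?_, fun ⟨hNS, hG⟩ => isEqDomain_of_isGEqDomain hP hNS hG⟩
  have hNS := nonsingular_of_isEqDomain P i0 l0 h
  have := hNS.nontrivial h.nontrivial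
  exact ⟨hNS, isGEqDomain_of_isEqDomain hP h⟩

/-- Main theorem: a finite simple semigroup `S = M(G; I, Λ; P)` with normalized
`P` is an equational domain iff `P` is nonsingular and `G` is an equational
domain in the group language with constants. -/
theorem rees_eqDomain_iff (G I Λ : Type*) [Group G] [Fintype G] [Fintype I]
    [Fintype Λ] (P : I → Λ → G) (i0 : I) (l0 : Λ) (hP : Normalized P i0 l0) :
    IsEqDomain (Λ × G × I) (reesMul P) ↔ Nonsingular P ∧ IsGEqDomain G :=
  rees_eqDomain_iff_general G I Λ P i0 l0 hP

end Stmt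
end

section
/- Let S = M(G; I, Λ; P) be a finite simple semigroup with normalized matrix P. If |G|^{|Λ|-1} < |I| or |G|^{|I|-1} < |Λ|, then P has two equal rows or two equal columns, and consequently S is not an equational domain. In particular, if G is trivial and |I| > 1 or |Λ| > 1, then S is not an equational domain. -/
namespace Stmt

section Aux

open Classical in
private lemma getLastD_map' {α β : Type*} (f : α → β) :
    ∀ (L : List α) (d : α), (L.map f).getLastD (f d) = f (L.getLastD d) := by
  intro L
  induction L with
  | nil => intro d; rfl
  | cons x xs ih =>
    intro d
    simp only [List.map_cons, List.getLastD_cons]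
    exact ih x

/-- Last letter of a term. -/
def lastL {S' : Type*} {n : ℕ} (t : SgTerm S' n) : Fin n ⊕ S' := t.2.getLastD t.1

variable {G I Λ : Type*} [Group G] (P : I → Λ → G)

private lemma foldl_fst {n : ℕ} (p : Fin n → Λ × G × I) :
    ∀ (L : List (Fin n ⊕ (Λ × G × I))) (a : Λ × G × I),
      (L.foldl (fun c l => reesMul P c (evalL p l)) a).1 = a.1 := by
  intro L
  induction L with
  | nil => intro a; rfl
  | cons x xs ih => intro a; exact ih _

private lemma eval_fst {n : ℕ} (t : SgTerm (Λ × G × I) n) (p : Fin n → Λ × G × I) :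
    (SgTerm.eval (reesMul P) t p).1 = (evalL p t.1).1 :=
  foldl_fst P p t.2 _

private lemma foldl_thd {n : ℕ} (p : Fin n → Λ × G × I) :
    ∀ (L : List (Fin n ⊕ (Λ × G × I))) (a : Λ × G × I),
      (L.foldl (fun c l => reesMul P c (evalL p l)) a).2.2
        = (L.map (fun x => (evalL p x).2.2)).getLastD a.2.2 := by
  intro L
  induction L with
  | nil => intro a; rfl
  | cons x xs ih =>
    intro a
    rw [List.foldl_cons, List.map_cons, List.getLastD_cons, ih]
    rfl

private lemma eval_thd {n : ℕ} (t : SgTerm (Λ × G × I) n) (p : Fin n → Λ × G × I) :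
    (SgTerm.eval (reesMul P) t p).2.2 = (evalL p (lastL t)).2.2 := by
  show (t.2.foldl (fun a l => reesMul P a (evalL p l)) (evalL p t.1)).2.2 = _
  rw [foldl_thd]
  exact getLastD_map' (fun x => (evalL p x).2.2) t.2 t.1

private lemma foldl_rel {n : ℕ} (p q : Fin n → Λ × G × I)
    (h1 : ∀ (k : I) (m : Fin n), P k (q m).1 = P k (p m).1)
    (h2 : ∀ m : Fin n, (q m).2.1 = (p m).2.1)
    (h3 : ∀ (m : Fin n) (μ : Λ), P (q m).2.2 μ = P (p m).2.2 μ) :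
    ∀ (L : List (Fin n ⊕ (Λ × G × I))) (a b : Λ × G × I),
      a.2.1 = b.2.1 → (∀ μ, P a.2.2 μ = P b.2.2 μ) →
      (L.foldl (fun c l => reesMul P c (evalL q l)) b).2.1
          = (L.foldl (fun c l => reesMul P c (evalL p l)) a).2.1 ∧
      ∀ μ, P (L.foldl (fun c l => reesMul P c (evalL q l)) b).2.2 μ
          = P (L.foldl (fun c l => reesMul P c (evalL p l)) a).2.2 μ := by
  intro L
  induction L with
  | nil => intro a b hab1 hab2; exact ⟨hab1.symm, fun μ => (hab2 μ).symm⟩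
  | cons x xs ih =>
    intro a b hab1 hab2
    rw [List.foldl_cons, List.foldl_cons]
    apply ih
    · show a.2.1 * P a.2.2 (evalL p x).1 * (evalL p x).2.1
        = b.2.1 * P b.2.2 (evalL q x).1 * (evalL q x).2.1
      cases x with
      | inl m =>
        show a.2.1 * P a.2.2 (p m).1 * (p m).2.1 = b.2.1 * P b.2.2 (q m).1 * (q m).2.1
        rw [hab1, h2 m, ← hab2 (q m).1, h1 a.2.2 m]
      | inr c =>
        show a.2.1 * P a.2.2 c.1 * c.2.1 = b.2.1 * P b.2.2 c.1 * c.2.1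
        rw [hab1, ← hab2 c.1]
    · intro μ
      show P (evalL p x).2.2 μ = P (evalL q x).2.2 μ
      cases x with
      | inl m => exact (h3 m μ).symm
      | inr c => rfl

private lemma eval_rel {n : ℕ} (p q : Fin n → Λ × G × I)
    (h1 : ∀ (k : I) (m : Fin n), P k (q m).1 = P k (p m).1)
    (h2 : ∀ m : Fin n, (q m).2.1 = (p m).2.1)
    (h3 : ∀ (m : Fin n) (μ : Λ), P (q m).2.2 μ = P (p m).2.2 μ)
    (t : SgTerm (Λ × G × I) n) :
    (SgTerm.eval (reesMul P) t q).2.1 = (SgTerm.eval (reesMul P) t p).2.1 := by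
  have hstart1 : (evalL p t.1).2.1 = (evalL q t.1).2.1 := by
    rcases t.1 with m | c
    · exact (h2 m).symm
    · rfl
  have hstart2 : ∀ μ, P (evalL p t.1).2.2 μ = P (evalL q t.1).2.2 μ := by
    intro μ
    rcases t.1 with m | c
    · exact (h3 m μ).symm
    · rfl
  exact (foldl_rel P p q h1 h2 h3 t.2 (evalL p t.1) (evalL q t.1) hstart1 hstart2).1

end Aux

section Main

variable {G I Λ : Type*} [Group G]

lemma not_eqDomain_rows (P : I → Λ → G) (i j : I) (hij : i ≠ j)
    (hrow : ∀ l, P i l = P j l) (l0 : Λ) :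
    ¬ IsEqDomain (Λ × G × I) (reesMul P) := by
  classical
  intro hED
  have hswapP : ∀ (k : I) (l : Λ), P (Equiv.swap i j k) l = P k l := by
    intro k l
    rcases eq_or_ne k i with rfl | hki
    · rw [Equiv.swap_apply_left]; exact (hrow l).symm
    rcases eq_or_ne k j with rfl | hkj
    · rw [Equiv.swap_apply_right]; exact hrow l
    · rw [Equiv.swap_apply_of_ne_of_ne hki hkj]
  have huv : (l0, (1 : G), i) ≠ (l0, (1 : G), j) := by
    intro h
    exact hij (congrArg (fun z => z.2.2) h)
  obtain ⟨Sys, hSys⟩ := hED 2 2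
    ![{p | p 0 = (l0, (1 : G), i)}, {p | p 1 = (l0, (1 : G), j)}]
    (by
      intro k
      fin_cases k
      · refine ⟨{((Sum.inl 0, []), (Sum.inr (l0, (1 : G), i), []))}, ?_⟩
        ext p
        simp [SgTerm.eval, evalL]
      · refine ⟨{((Sum.inl 1, []), (Sum.inr (l0, (1 : G), j), []))}, ?_⟩
        ext p
        simp [SgTerm.eval, evalL])
  have hmem : ∀ p : Fin 2 → Λ × G × I,
      (p ∈ ⋃ k, (![{p | p 0 = (l0, (1 : G), i)}, {p | p 1 = (l0, (1 : G), j)}] :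
          Fin 2 → Set (Fin 2 → Λ × G × I)) k)
        ↔ (p 0 = (l0, (1 : G), i) ∨ p 1 = (l0, (1 : G), j)) := by
    intro p
    simp [Set.mem_iUnion, Fin.exists_fin_two]
  have hforall : ∀ p : Fin 2 → Λ × G × I,
      (p 0 = (l0, (1 : G), i) ∨ p 1 = (l0, (1 : G), j)) →
      ∀ e ∈ Sys, SgTerm.eval (reesMul P) e.1 p = SgTerm.eval (reesMul P) e.2 p := by
    intro p hp
    have hm : p ∈ ⋃ k, (![{p | p 0 = (l0, (1 : G), i)}, {p | p 1 = (l0, (1 : G), j)}] :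
        Fin 2 → Set (Fin 2 → Λ × G × I)) k := (hmem p).mpr hp
    rw [hSys] at hm
    exact hm
  -- the mixed-last-letter case is impossible
  have hmix : ∀ t s : SgTerm (Λ × G × I) 2,
      (∀ r : Fin 2 → Λ × G × I, (r 0 = (l0, (1 : G), i) ∨ r 1 = (l0, (1 : G), j)) →
        SgTerm.eval (reesMul P) t r = SgTerm.eval (reesMul P) s r) →
      ∀ (m : Fin 2) (c : Λ × G × I), lastL t = Sum.inl m → lastL s = Sum.inr c → False := by
    intro t s hts m c hlt hls
    have hkc : (if c.2.2 = i then j else i) ≠ c.2.2 := by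
      split_ifs with h
      · rw [h]; exact hij.symm
      · exact fun hh => h hh.symm
    have hrmem : (Function.update ![(l0, (1 : G), i), (l0, (1 : G), j)] m
          (l0, (1 : G), if c.2.2 = i then j else i)) 0 = (l0, (1 : G), i) ∨
        (Function.update ![(l0, (1 : G), i), (l0, (1 : G), j)] m
          (l0, (1 : G), if c.2.2 = i then j else i)) 1 = (l0, (1 : G), j) := by
      fin_cases m
      · right
        rw [Function.update_of_ne (by decide)]
        rfl
      · left
        rw [Function.update_of_ne (by decide)]
        rfl
    have h := hts _ hrmem
    have h3 := congrArg (fun z : Λ × G × I => z.2.2) h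
    simp only [eval_thd, hlt, hls] at h3
    have h3' : (Function.update ![(l0, (1 : G), i), (l0, (1 : G), j)] m
        (l0, (1 : G), if c.2.2 = i then j else i) m).2.2 = c.2.2 := h3
    rw [Function.update_self] at h3'
    exact hkc h3'
  -- the swapped point
  have hq := hforall ![(l0, (1 : G), i), (l0, (1 : G), j)] (Or.inl rfl)
  have hqq : ((fun s : Λ × G × I => (s.1, s.2.1, Equiv.swap i j s.2.2)) ∘
      ![(l0, (1 : G), i), (l0, (1 : G), j)]) ∉
      ⋃ k, (![{p | p 0 = (l0, (1 : G), i)}, {p | p 1 = (l0, (1 : G), j)}] :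
        Fin 2 → Set (Fin 2 → Λ × G × I)) k := by
    rw [hmem]
    rintro (h | h)
    · apply huv
      have : ((l0, (1 : G), Equiv.swap i j i) : Λ × G × I) = (l0, 1, i) := h
      rw [Equiv.swap_apply_left] at this
      exact this.symm
    · apply huv
      have : ((l0, (1 : G), Equiv.swap i j j) : Λ × G × I) = (l0, 1, j) := h
      rw [Equiv.swap_apply_right] at this
      exact this
  rw [hSys] at hqq
  simp only [Set.mem_setOf_eq, not_forall] at hqq
  obtain ⟨e, heSys, hne⟩ := hqq
  apply hne
  set q₀ := ((fun s : Λ × G × I => (s.1, s.2.1, Equiv.swap i j s.2.2)) ∘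
      ![(l0, (1 : G), i), (l0, (1 : G), j)]) with hq₀def
  set p₀ := (![(l0, (1 : G), i), (l0, (1 : G), j)] : Fin 2 → Λ × G × I) with hp₀def
  have heq : SgTerm.eval (reesMul P) e.1 p₀ = SgTerm.eval (reesMul P) e.2 p₀ := hq e heSys
  have hcomp1 : ∀ (k : I) (m : Fin 2), P k (q₀ m).1 = P k (p₀ m).1 := fun _ _ => rfl
  have hcomp2 : ∀ m : Fin 2, (q₀ m).2.1 = (p₀ m).2.1 := fun _ => rfl
  have hcomp3 : ∀ (m : Fin 2) (μ : Λ), P (q₀ m).2.2 μ = P (p₀ m).2.2 μ := by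
    intro m μ
    exact hswapP _ μ
  have hfst : ∀ t : SgTerm (Λ × G × I) 2,
      (SgTerm.eval (reesMul P) t q₀).1 = (SgTerm.eval (reesMul P) t p₀).1 := by
    intro t
    rw [eval_fst, eval_fst]
    cases t.1 with
    | inl m => rfl
    | inr c => rfl
  have hthd3 : ∀ (t : SgTerm (Λ × G × I) 2) (m : Fin 2), lastL t = Sum.inl m →
      (SgTerm.eval (reesMul P) t q₀).2.2 = Equiv.swap i j (SgTerm.eval (reesMul P) t p₀).2.2 := by
    intro t m hm
    rw [eval_thd, eval_thd, hm]
    rfl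
  have hthdc : ∀ (t : SgTerm (Λ × G × I) 2) (c : Λ × G × I), lastL t = Sum.inr c →
      (SgTerm.eval (reesMul P) t q₀).2.2 = (SgTerm.eval (reesMul P) t p₀).2.2 := by
    intro t c hc
    rw [eval_thd, eval_thd, hc]
    rfl
  refine Prod.ext ((hfst e.1).trans (((hfst e.2).trans (congrArg _ heq.symm)).symm))
    (Prod.ext ?_ ?_)
  · have ha := eval_rel P p₀ q₀ hcomp1 hcomp2 hcomp3 e.1
    have hb := eval_rel P p₀ q₀ hcomp1 hcomp2 hcomp3 e.2
    show (SgTerm.eval (reesMul P) e.1 q₀).2.1 = (SgTerm.eval (reesMul P) e.2 q₀).2.1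
    rw [ha, hb, heq]
  · show (SgTerm.eval (reesMul P) e.1 q₀).2.2 = (SgTerm.eval (reesMul P) e.2 q₀).2.2
    rcases ht : lastL e.1 with mt | ct <;> rcases hs : lastL e.2 with ms | cs
    · rw [hthd3 e.1 mt ht, hthd3 e.2 ms hs, heq]
    · exact absurd (hmix e.1 e.2 (fun r hr => hforall r hr e heSys) mt cs ht hs) not_false
    · exact absurd (hmix e.2 e.1 (fun r hr => (hforall r hr e heSys).symm) ms ct hs ht) not_false
    · rw [hthdc e.1 ct ht, hthdc e.2 cs hs, heq]

end Main

section MainCols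

variable {G I Λ : Type*} [Group G]

lemma not_eqDomain_cols (P : I → Λ → G) (l m : Λ) (hlm : l ≠ m)
    (hcol : ∀ k, P k l = P k m) (i0 : I) :
    ¬ IsEqDomain (Λ × G × I) (reesMul P) := by
  classical
  intro hED
  have hswapP : ∀ (k : I) (μ : Λ), P k (Equiv.swap l m μ) = P k μ := by
    intro k μ
    rcases eq_or_ne μ l with rfl | hμl
    · rw [Equiv.swap_apply_left]; exact (hcol k).symm
    rcases eq_or_ne μ m with rfl | hμm
    · rw [Equiv.swap_apply_right]; exact hcol k
    · rw [Equiv.swap_apply_of_ne_of_ne hμl hμm]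
  have huv : (l, (1 : G), i0) ≠ (m, (1 : G), i0) := by
    intro h
    exact hlm (congrArg (fun z => z.1) h)
  obtain ⟨Sys, hSys⟩ := hED 2 2
    ![{p | p 0 = (l, (1 : G), i0)}, {p | p 1 = (m, (1 : G), i0)}]
    (by
      intro k
      fin_cases k
      · refine ⟨{((Sum.inl 0, []), (Sum.inr (l, (1 : G), i0), []))}, ?_⟩
        ext p
        simp [SgTerm.eval, evalL]
      · refine ⟨{((Sum.inl 1, []), (Sum.inr (m, (1 : G), i0), []))}, ?_⟩
        ext p
        simp [SgTerm.eval, evalL])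
  have hmem : ∀ p : Fin 2 → Λ × G × I,
      (p ∈ ⋃ k, (![{p | p 0 = (l, (1 : G), i0)}, {p | p 1 = (m, (1 : G), i0)}] :
          Fin 2 → Set (Fin 2 → Λ × G × I)) k)
        ↔ (p 0 = (l, (1 : G), i0) ∨ p 1 = (m, (1 : G), i0)) := by
    intro p
    simp [Set.mem_iUnion, Fin.exists_fin_two]
  have hforall : ∀ p : Fin 2 → Λ × G × I,
      (p 0 = (l, (1 : G), i0) ∨ p 1 = (m, (1 : G), i0)) →
      ∀ e ∈ Sys, SgTerm.eval (reesMul P) e.1 p = SgTerm.eval (reesMul P) e.2 p := by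
    intro p hp
    have hm : p ∈ ⋃ k, (![{p | p 0 = (l, (1 : G), i0)}, {p | p 1 = (m, (1 : G), i0)}] :
        Fin 2 → Set (Fin 2 → Λ × G × I)) k := (hmem p).mpr hp
    rw [hSys] at hm
    exact hm
  -- the mixed-head-letter case is impossible
  have hmix : ∀ t s : SgTerm (Λ × G × I) 2,
      (∀ r : Fin 2 → Λ × G × I, (r 0 = (l, (1 : G), i0) ∨ r 1 = (m, (1 : G), i0)) →
        SgTerm.eval (reesMul P) t r = SgTerm.eval (reesMul P) s r) →
      ∀ (w : Fin 2) (c : Λ × G × I), t.1 = Sum.inl w → s.1 = Sum.inr c → False := by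
    intro t s hts w c hlt hls
    have hkc : (if c.1 = l then m else l) ≠ c.1 := by
      split_ifs with h
      · rw [h]; exact hlm.symm
      · exact fun hh => h hh.symm
    have hrmem : (Function.update ![(l, (1 : G), i0), (m, (1 : G), i0)] w
          ((if c.1 = l then m else l), (1 : G), i0)) 0 = (l, (1 : G), i0) ∨
        (Function.update ![(l, (1 : G), i0), (m, (1 : G), i0)] w
          ((if c.1 = l then m else l), (1 : G), i0)) 1 = (m, (1 : G), i0) := by
      fin_cases w
      · right
        rw [Function.update_of_ne (by decide)]
        rfl
      · left
        rw [Function.update_of_ne (by decide)]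
        rfl
    have h := hts _ hrmem
    have h1 := congrArg (fun z : Λ × G × I => z.1) h
    simp only [eval_fst, hlt, hls] at h1
    have h1' : (Function.update ![(l, (1 : G), i0), (m, (1 : G), i0)] w
        ((if c.1 = l then m else l), (1 : G), i0) w).1 = c.1 := h1
    rw [Function.update_self] at h1'
    exact hkc h1'
  -- the swapped point
  have hq := hforall ![(l, (1 : G), i0), (m, (1 : G), i0)] (Or.inl rfl)
  have hqq : ((fun s : Λ × G × I => (Equiv.swap l m s.1, s.2.1, s.2.2)) ∘
      ![(l, (1 : G), i0), (m, (1 : G), i0)]) ∉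
      ⋃ k, (![{p | p 0 = (l, (1 : G), i0)}, {p | p 1 = (m, (1 : G), i0)}] :
        Fin 2 → Set (Fin 2 → Λ × G × I)) k := by
    rw [hmem]
    rintro (h | h)
    · apply huv
      have : ((Equiv.swap l m l, (1 : G), i0) : Λ × G × I) = (l, 1, i0) := h
      rw [Equiv.swap_apply_left] at this
      exact this.symm
    · apply huv
      have : ((Equiv.swap l m m, (1 : G), i0) : Λ × G × I) = (m, 1, i0) := h
      rw [Equiv.swap_apply_right] at this
      exact this
  rw [hSys] at hqq
  simp only [Set.mem_setOf_eq, not_forall] at hqq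
  obtain ⟨e, heSys, hne⟩ := hqq
  apply hne
  set q₀ := ((fun s : Λ × G × I => (Equiv.swap l m s.1, s.2.1, s.2.2)) ∘
      ![(l, (1 : G), i0), (m, (1 : G), i0)]) with hq₀def
  set p₀ := (![(l, (1 : G), i0), (m, (1 : G), i0)] : Fin 2 → Λ × G × I) with hp₀def
  have heq : SgTerm.eval (reesMul P) e.1 p₀ = SgTerm.eval (reesMul P) e.2 p₀ := hq e heSys
  have hcomp1 : ∀ (k : I) (w : Fin 2), P k (q₀ w).1 = P k (p₀ w).1 := by
    intro k w
    exact hswapP k _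
  have hcomp2 : ∀ w : Fin 2, (q₀ w).2.1 = (p₀ w).2.1 := fun _ => rfl
  have hcomp3 : ∀ (w : Fin 2) (μ : Λ), P (q₀ w).2.2 μ = P (p₀ w).2.2 μ := fun _ _ => rfl
  have hthd : ∀ t : SgTerm (Λ × G × I) 2,
      (SgTerm.eval (reesMul P) t q₀).2.2 = (SgTerm.eval (reesMul P) t p₀).2.2 := by
    intro t
    rw [eval_thd, eval_thd]
    cases lastL t with
    | inl w => rfl
    | inr c => rfl
  have hfst3 : ∀ (t : SgTerm (Λ × G × I) 2) (w : Fin 2), t.1 = Sum.inl w →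
      (SgTerm.eval (reesMul P) t q₀).1 = Equiv.swap l m (SgTerm.eval (reesMul P) t p₀).1 := by
    intro t w hw
    rw [eval_fst, eval_fst, hw]
    rfl
  have hfstc : ∀ (t : SgTerm (Λ × G × I) 2) (c : Λ × G × I), t.1 = Sum.inr c →
      (SgTerm.eval (reesMul P) t q₀).1 = (SgTerm.eval (reesMul P) t p₀).1 := by
    intro t c hc
    rw [eval_fst, eval_fst, hc]
    rfl
  refine Prod.ext ?_ (Prod.ext ?_ ?_)
  · show (SgTerm.eval (reesMul P) e.1 q₀).1 = (SgTerm.eval (reesMul P) e.2 q₀).1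
    rcases ht : e.1.1 with wt | ct <;> rcases hs : e.2.1 with ws | cs
    · rw [hfst3 e.1 wt ht, hfst3 e.2 ws hs, heq]
    · exact absurd (hmix e.1 e.2 (fun r hr => hforall r hr e heSys) wt cs ht hs) not_false
    · exact absurd (hmix e.2 e.1 (fun r hr => (hforall r hr e heSys).symm) ws ct hs ht) not_false
    · rw [hfstc e.1 ct ht, hfstc e.2 cs hs, heq]
  · have ha := eval_rel P p₀ q₀ hcomp1 hcomp2 hcomp3 e.1
    have hb := eval_rel P p₀ q₀ hcomp1 hcomp2 hcomp3 e.2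
    show (SgTerm.eval (reesMul P) e.1 q₀).2.1 = (SgTerm.eval (reesMul P) e.2 q₀).2.1
    rw [ha, hb, heq]
  · show (SgTerm.eval (reesMul P) e.1 q₀).2.2 = (SgTerm.eval (reesMul P) e.2 q₀).2.2
    rw [hthd e.1, hthd e.2, heq]

end MainCols

section Pigeonhole

variable {G I Λ : Type*} [Group G] [Fintype G] [Fintype I] [Fintype Λ]

lemma exists_rows_eq (P : I → Λ → G) (l0 : Λ) (hcol0 : ∀ i, P i l0 = 1)
    (h : Fintype.card G ^ (Fintype.card Λ - 1) < Fintype.card I) :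
    ∃ i j : I, i ≠ j ∧ ∀ l, P i l = P j l := by
  classical
  have hcard : Fintype.card ({l : Λ // l ≠ l0} → G) < Fintype.card I := by
    rw [Fintype.card_fun]
    have hsub : Fintype.card {l : Λ // l ≠ l0} = Fintype.card Λ - 1 := by
      rw [Fintype.card_subtype_compl, Fintype.card_subtype_eq]
    rwa [hsub]
  obtain ⟨i, j, hij, hfe⟩ := Fintype.exists_ne_map_eq_of_card_lt
    (fun i => (fun l : {l : Λ // l ≠ l0} => P i l.1)) hcard
  refine ⟨i, j, hij, fun l => ?_⟩
  by_cases hl : l = l0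
  · rw [hl, hcol0, hcol0]
  · exact congrFun hfe ⟨l, hl⟩

lemma exists_cols_eq (P : I → Λ → G) (i0 : I) (hrow0 : ∀ l, P i0 l = 1)
    (h : Fintype.card G ^ (Fintype.card I - 1) < Fintype.card Λ) :
    ∃ l μ : Λ, l ≠ μ ∧ ∀ i, P i l = P i μ := by
  classical
  have hcard : Fintype.card ({i : I // i ≠ i0} → G) < Fintype.card Λ := by
    rw [Fintype.card_fun]
    have hsub : Fintype.card {i : I // i ≠ i0} = Fintype.card I - 1 := by
      rw [Fintype.card_subtype_compl, Fintype.card_subtype_eq]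
    rwa [hsub]
  obtain ⟨l, μ, hlμ, hfe⟩ := Fintype.exists_ne_map_eq_of_card_lt
    (fun l => (fun i : {i : I // i ≠ i0} => P i.1 l)) hcard
  refine ⟨l, μ, hlμ, fun i => ?_⟩
  by_cases hi : i = i0
  · rw [hi, hrow0, hrow0]
  · exact congrFun hfe ⟨i, hi⟩

end Pigeonhole

/-- If `|G|^(|Λ|-1) < |I|` or `|G|^(|I|-1) < |Λ|`, then the normalized matrix
`P` has two equal rows or two equal columns, and `S` is not an equational
domain. In particular, if `G` is trivial and `|I| > 1` or `|Λ| > 1`, then `S`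
is not an equational domain. -/
theorem not_eqDomain_of_card_bounds (G I Λ : Type*) [Group G] [Fintype G]
    [Fintype I] [Fintype Λ] (P : I → Λ → G) (i0 : I) (l0 : Λ)
    (hP : Normalized P i0 l0) :
    ((Fintype.card G ^ (Fintype.card Λ - 1) < Fintype.card I ∨
        Fintype.card G ^ (Fintype.card I - 1) < Fintype.card Λ) →
      ((∃ i j : I, i ≠ j ∧ ∀ l, P i l = P j l) ∨
        (∃ l μ : Λ, l ≠ μ ∧ ∀ i, P i l = P i μ)) ∧
      ¬ IsEqDomain (Λ × G × I) (reesMul P)) ∧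
    ((∀ g : G, g = 1) → (1 < Fintype.card I ∨ 1 < Fintype.card Λ) →
      ¬ IsEqDomain (Λ × G × I) (reesMul P)) := by
  classical
  constructor
  · intro h
    have hkey : (∃ i j : I, i ≠ j ∧ ∀ l, P i l = P j l) ∨
        (∃ l μ : Λ, l ≠ μ ∧ ∀ i, P i l = P i μ) := by
      rcases h with h | h
      · exact Or.inl (exists_rows_eq P l0 hP.1 h)
      · exact Or.inr (exists_cols_eq P i0 hP.2 h)
    refine ⟨hkey, ?_⟩
    rcases hkey with ⟨i, j, hij, hr⟩ | ⟨l, μ, hlμ, hc⟩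
    · exact not_eqDomain_rows P i j hij hr l0
    · exact not_eqDomain_cols P l μ hlμ hc i0
  · intro hG h
    have hg1 : Fintype.card G = 1 := Fintype.card_eq_one_iff.mpr ⟨1, fun g => hG g⟩
    rcases h with h | h
    · obtain ⟨i, j, hij, hr⟩ := exists_rows_eq P l0 hP.1 (by rw [hg1, one_pow]; exact h)
      exact not_eqDomain_rows P i j hij hr l0
    · obtain ⟨l, μ, hlμ, hc⟩ := exists_cols_eq P i0 hP.2 (by rw [hg1, one_pow]; exact h)
      exact not_eqDomain_cols P l μ hlμ hc i0


end Stmt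
end
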